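/- (Corollary on marginal distribution bounds.) Let Q be a rate matrix on a countable state space S such that {z ∈ S : q(z,x) ≠ 0} is finite for every x ∈ S, let w be norm-like, suppose P_{w,c} is non-empty, and let {A_i}_{i∈I} be a collection of pairwise disjoint subsets of S with ∪_{i∈I} A_i = S. For a stationary solution π define its marginal π̂(i) := ∑_{x∈A_i} π(x). Let I_r := {i ∈ I : A_i ∩ S_r ≠ ∅}, define l̂^r(i) := inf{∑_{x∈A_i} π^r(x) : π^r ∈ P^r_{w,c}} and û^r(i) := sup{∑_{x∈A_i} π^r(x) : π^r ∈ P^r_{w,c}} for i ∈ I_r, and l̂^r(i) := û^r(i) := 0 for i ∉ I_r. Then: (i) for any π ∈ P_{w,c} and r ≥ 1, l̂^r(i) ≤ π̂(i) for all i ∈ I, ‖l̂^r − π̂‖ = 1 − ∑_{i∈I_r} l̂^r(i), and ‖û^r − π̂‖ ≤ max{∑_{i∈I_r} û^r(i) − 1 + m_r, m_r} ≤ max{∑_{i∈I_r} û^r(i) − 1 + c/r, c/r}, where m_r := ∑_{x∉S_r} π(x); (ii) if P_{w,c} = {π} is a singleton, then û^r converges pointwise to π̂ and l̂^r converges to π̂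 in total variation as r → ∞. -/

import Mathlib

/-!
Part (i) is bookkeeping: the truncation `1_{S_r} π` of any `π ∈ P_{w,c}` lies in `P^r_{w,c}`
(Markov's inequality `π(S_rᶜ) ≤ c/r` gives the mass condition), so `l̂^r` and `û^r` bracket its
marginal, which differs from `π̂` by the marginal of the tail `1_{S_rᶜ} π`. The two total
variation estimates hold for any summable functions ordered in this way.

Part (ii) is a compactness argument. The members of `P^r_{w,c}` lie in the compact cube `[0,1]^S`,
and every pointwise limit of members of `P^{r_k}_{w,c}` with `r_k → ∞` lies in `P_{w,c}` (finiteness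
of the incoming rates makes the stationary equation at `x` a finite sum, imposed as soon as
`r_k > w` on its support). Uniqueness of `π` then forces `P^r_{w,c} → π` uniformly on finite sets,
and by tightness (`ρ(S_mᶜ) ≤ c/m` for every `ρ`) uniformly in `ℓ¹`. Hence `l̂^r, û^r → π̂`
pointwise, and dominated convergence under `l̂^r ≤ π̂` gives `∑ l̂^r → 1`.
-/

open scoped Classical

open Filter

/-- The set `P_{w,c}` of stationary solutions `π` of the CME for the rate matrix `q`
(`π ≥ 0`, `∑ π = 1`, `πQ(x) = 0` for all `x`) satisfying the moment bound `⟨w⟩ ≤ c`. -/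
def statSet {σ : Type*} (q : σ → σ → ℝ) (w : σ → ℝ) (c : ℝ) : Set (σ → ℝ) :=
  {π | (∀ x, 0 ≤ π x) ∧ HasSum π 1 ∧ (∀ x, HasSum (fun y => π y * q y x) 0) ∧
    Summable (fun x => w x * π x) ∧ (∑' x, w x * π x) ≤ c}

/-- The truncation `S_r = {x : w(x) < r}`. -/
def truncSet {σ : Type*} (w : σ → ℝ) (r : ℝ) : Set σ := {x | w x < r}

/-- The set `N_r` of states of `S_r` whose stationary equation only involves states of
`S_r`. -/
def eqStates {σ : Type*} (q : σ → σ → ℝ) (w : σ → ℝ) (r : ℝ) : Set σ :=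
  {x | w x < r ∧ ∀ z, q z x ≠ 0 → w z < r}

/-- The outer approximation `P^r_{w,c}`: all `π^r ≥ 0` vanishing outside `S_r` with
`π^r Q(x) = 0` for `x ∈ N_r`, `1 - c/r ≤ ∑ π^r ≤ 1` and `∑ w π^r ≤ c`. -/
def truncPolytope {σ : Type*} (q : σ → σ → ℝ) (w : σ → ℝ) (c r : ℝ) : Set (σ → ℝ) :=
  {ρ | (∀ x, 0 ≤ ρ x) ∧ (∀ x, ¬ w x < r → ρ x = 0) ∧
    (∀ x ∈ eqStates q w r, ∑' y, ρ y * q y x = 0) ∧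
    1 - c / r ≤ ∑' x, ρ x ∧ (∑' x, ρ x) ≤ 1 ∧ (∑' x, w x * ρ x) ≤ c}

/-- The total variation distance `‖ρ₁ - ρ₂‖ = sup_{A ⊆ S} |∑_{x ∈ A} (ρ₁(x) - ρ₂(x))|`. -/
noncomputable def tvDist {σ : Type*} (ρ₁ ρ₂ : σ → ℝ) : ℝ :=
  ⨆ A : Set σ, |∑' x : A, (ρ₁ x - ρ₂ x)|

open Filter Topology Function

section MarginalDistributionBounds

variable {σ ι : Type*}

section Summation

lemma tsum_subtype_le_tsum_subtype {f : σ → ℝ} (hf0 : ∀ x, 0 ≤ f x) (hf : Summable f)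
    {s t : Set σ} (hst : s ⊆ t) : ∑' x : s, f x ≤ ∑' x : t, f x := by
  rw [tsum_subtype s f, tsum_subtype t f]
  exact Summable.tsum_le_tsum (Set.indicator_le_indicator_of_subset hst hf0)
    (hf.indicator s) (hf.indicator t)

lemma Set.Finite.tsum_subtype_eq_sum {s : Set σ} (hs : s.Finite) (f : σ → ℝ) :
    ∑' x : s, f x = ∑ x ∈ hs.toFinset, f x := by
  rw [← Finset.tsum_subtype', hs.coe_toFinset]

lemma tsum_subtype_indicator_add_indicator_compl {f : σ → ℝ} (hf : Summable f) (s t : Set σ) :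
    ∑' x : t, s.indicator f x + ∑' x : t, sᶜ.indicator f x = ∑' x : t, f x := by
  have hs : Summable fun x : t => s.indicator f x := (hf.indicator s).subtype t
  have hsc : Summable fun x : t => sᶜ.indicator f x := (hf.indicator sᶜ).subtype t
  simp only [← hs.tsum_add hsc, Set.indicator_self_add_compl_apply]

lemma abs_tsum_subtype_sub_le {f g : σ → ℝ} (hf : Summable f) (hg : Summable g) (s : Set σ) :
    |∑' x : s, f x - ∑' x : s, g x| ≤ ∑' x, |f x - g x| := by
  have hfs : Summable fun x : s => f x := hf.subtype s
  have hgs : Summable fun x : s => g x := hg.subtype s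
  have hd : Summable fun x : s => ‖f x - g x‖ := (hf.sub hg).norm.subtype s
  rw [← hfs.tsum_sub hgs]
  calc |∑' x : s, (f x - g x)| ≤ ∑' x : s, |f x - g x| := norm_tsum_le_tsum_norm hd
    _ ≤ ∑' x, |f x - g x| :=
        Summable.tsum_subtype_le _ s (fun _ => abs_nonneg _) (hf.sub hg).abs

lemma hasSum_tsum_subtype_of_iUnion_eq_univ {A : ι → Set σ} (hA : Pairwise (Disjoint on A))
    (hcov : ⋃ i, A i = Set.univ) {f : σ → ℝ} (hf : Summable f) :
    HasSum (fun i => ∑' x : A i, f x) (∑' x, f x) := by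
  let e : (Σ i, A i) ≃ σ := (Set.unionEqSigmaOfDisjoint hA).symm.trans
    ((Equiv.setCongr hcov).trans (Equiv.Set.univ σ))
  exact (e.hasSum_iff.2 hf.hasSum).sigma fun i => (hf.subtype (A i)).hasSum

lemma finite_setOf_inter_nonempty {A : ι → Set σ} (hA : Pairwise (Disjoint on A)) {s : Set σ}
    (hs : s.Finite) : {i | (A i ∩ s).Nonempty}.Finite := by
  refine (hs.biUnion fun x _ => ?_).subset fun i ⟨x, hxA, hxs⟩ => Set.mem_biUnion hxs hxA
  exact Set.Subsingleton.finite fun i hi j hj =>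
    by_contra fun hij => Set.disjoint_left.1 (hA hij) hi hj

end Summation

section TotalVariation

lemma tvDist_eq_tsum_sub_tsum_of_le {l p : ι → ℝ} (hl : Summable l) (hp : Summable p)
    (hlp : ∀ i, l i ≤ p i) : tvDist l p = ∑' i, p i - ∑' i, l i := by
  have habs : ∀ B : Set ι, |∑' i : B, (l i - p i)| = ∑' i : B, (p i - l i) := fun B => by
    rw [abs_of_nonpos (tsum_nonpos fun i : B => sub_nonpos.2 (hlp i)), ← tsum_neg]
    simp only [neg_sub]
  have hbound : ∀ B : Set ι, |∑' i : B, (l i - p i)| ≤ ∑' i, p i - ∑' i, l i := fun B => by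
    rw [habs, ← hp.tsum_sub hl]
    exact Summable.tsum_subtype_le _ B (fun i => sub_nonneg.2 (hlp i)) (hp.sub hl)
  refine le_antisymm (ciSup_le hbound) ?_
  calc ∑' i, p i - ∑' i, l i = |∑' i : (Set.univ : Set ι), (l i - p i)| := by
        rw [habs, tsum_univ fun i => p i - l i, hp.tsum_sub hl]
    _ ≤ tvDist l p := le_ciSup ⟨_, Set.forall_mem_range.2 hbound⟩ _

lemma tvDist_le_of_sub_le {u p g : ι → ℝ} {m : ℝ} (hu : Summable u) (hp : Summable p)
    (hg : HasSum g m) (hg0 : ∀ i, 0 ≤ g i) (hpu : ∀ i, p i - u i ≤ g i) :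
    tvDist u p ≤ max (∑' i, u i - ∑' i, p i + m) m := by
  have hlow : ∀ B : Set ι, -m ≤ ∑' i : B, (u i - p i) := fun B =>
    calc -m ≤ -∑' i : B, g i :=
          neg_le_neg (hg.tsum_eq ▸ Summable.tsum_subtype_le g B hg0 hg.summable)
      _ = ∑' i : B, -g i := tsum_neg.symm
      _ ≤ ∑' i : B, (u i - p i) := Summable.tsum_le_tsum (fun i => by linarith [hpu i])
          (hg.summable.neg.subtype B) ((hu.sub hp).subtype B)
  refine ciSup_le fun B => abs_le.2 ⟨(neg_le_neg (le_max_right _ _)).trans (hlow B), ?_⟩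
  have hsplit := ((hu.sub hp).subtype B).tsum_add_tsum_compl ((hu.sub hp).subtype Bᶜ)
  rw [hu.tsum_sub hp] at hsplit
  linarith [hlow Bᶜ, le_max_left (∑' i, u i - ∑' i, p i + m) m]

end TotalVariation

lemma tsum_compl_truncSet_le_div {w f : σ → ℝ} {c r : ℝ} (hr : 0 < r) (hw : ∀ x, 0 ≤ w x)
    (hf0 : ∀ x, 0 ≤ f x) (hf : Summable f) (hwf : Summable fun x => w x * f x)
    (hc : ∑' x, w x * f x ≤ c) : ∑' x : ↥(truncSet w r)ᶜ, f x ≤ c / r := by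
  rw [le_div_iff₀ hr, ← tsum_mul_right]
  calc ∑' x : ↥(truncSet w r)ᶜ, f x * r ≤ ∑' x : ↥(truncSet w r)ᶜ, w x * f x :=
        Summable.tsum_le_tsum (fun x => by
          have hx : r ≤ w x := le_of_not_gt x.2
          nlinarith [hf0 x])
          ((hf.subtype _).mul_right r) (hwf.subtype _)
    _ ≤ ∑' x, w x * f x := Summable.tsum_subtype_le _ _ (fun x => mul_nonneg (hw x) (hf0 x)) hwf
    _ ≤ c := hc

section Truncation

variable {q : σ → σ → ℝ} {w : σ → ℝ} {c r : ℝ} {π ρ : σ → ℝ}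

lemma tsum_compl_truncSet_le_of_mem_statSet (hw : ∀ x, 0 ≤ w x) (hr : 0 < r)
    (hπ : π ∈ statSet q w c) : ∑' x : ↥(truncSet w r)ᶜ, π x ≤ c / r :=
  tsum_compl_truncSet_le_div hr hw hπ.1 hπ.2.1.summable hπ.2.2.2.1 hπ.2.2.2.2

lemma summable_mul_of_mem_truncPolytope (hS : (truncSet w r).Finite)
    (hρ : ρ ∈ truncPolytope q w c r) (g : σ → ℝ) : Summable fun x => g x * ρ x :=
  summable_of_hasFiniteSupport <| hS.subset <| (Function.support_mul_subset_right g ρ).trans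
    fun x hx => by_contra fun hxS => hx (hρ.2.1 x hxS)

lemma summable_of_mem_truncPolytope (hS : (truncSet w r).Finite)
    (hρ : ρ ∈ truncPolytope q w c r) : Summable ρ := by
  simpa using summable_mul_of_mem_truncPolytope hS hρ 1

lemma tsum_subtype_le_one_of_mem_truncPolytope (hS : (truncSet w r).Finite)
    (hρ : ρ ∈ truncPolytope q w c r) (s : Set σ) : ∑' x : s, ρ x ≤ 1 :=
  (Summable.tsum_subtype_le ρ s hρ.1 (summable_of_mem_truncPolytope hS hρ)).trans hρ.2.2.2.2.1

lemma le_one_of_mem_truncPolytope (hS : (truncSet w r).Finite)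
    (hρ : ρ ∈ truncPolytope q w c r) (x : σ) : ρ x ≤ 1 :=
  ((summable_of_mem_truncPolytope hS hρ).le_tsum x fun y _ => hρ.1 y).trans hρ.2.2.2.2.1

lemma tsum_compl_truncSet_le_of_mem_truncPolytope (hw : ∀ x, 0 ≤ w x)
    (hS : (truncSet w r).Finite) {m : ℝ} (hm : 0 < m) (hρ : ρ ∈ truncPolytope q w c r) :
    ∑' x : ↥(truncSet w m)ᶜ, ρ x ≤ c / m :=
  tsum_compl_truncSet_le_div hm hw hρ.1 (summable_of_mem_truncPolytope hS hρ)
    (summable_mul_of_mem_truncPolytope hS hρ w) hρ.2.2.2.2.2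

lemma one_sub_le_tsum_truncSet_of_mem_truncPolytope (hw : ∀ x, 0 ≤ w x)
    (hS : (truncSet w r).Finite) {m : ℝ} (hm : 0 < m) (hρ : ρ ∈ truncPolytope q w c r) :
    1 - c / r - c / m ≤ ∑' x : truncSet w m, ρ x := by
  have hρs := summable_of_mem_truncPolytope hS hρ
  have hsplit := Summable.tsum_add_tsum_compl (s := truncSet w m) (hρs.subtype _) (hρs.subtype _)
  linarith [hρ.2.2.2.1, tsum_compl_truncSet_le_of_mem_truncPolytope hw hS hm hρ]

lemma indicator_mem_truncPolytope (hw : ∀ x, 0 ≤ w x) (hr : 0 < r) (hπ : π ∈ statSet q w c) :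
    (truncSet w r).indicator π ∈ truncPolytope q w c r := by
  have htail := tsum_compl_truncSet_le_of_mem_statSet hw hr hπ
  obtain ⟨hπ0, hπ1, hπQ, hwπ, hwπc⟩ := hπ
  have hmass : ∑' x, (truncSet w r).indicator π x = 1 - ∑' x : ↥(truncSet w r)ᶜ, π x := by
    rw [← tsum_subtype, ← hπ1.tsum_eq,
      ← (hπ1.summable.subtype _).tsum_add_tsum_compl (hπ1.summable.subtype _), add_sub_cancel_right]
  have htail0 : 0 ≤ ∑' x : ↥(truncSet w r)ᶜ, π x := tsum_nonneg fun x => hπ0 x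
  refine ⟨fun x => Set.indicator_nonneg (fun x _ => hπ0 x) x,
    fun x hx => Set.indicator_of_notMem (s := truncSet w r) hx π, fun x hx => ?_,
    by linarith, by linarith, ?_⟩
  · -- only states of `S_r` feed into `x ∈ N_r`, so truncation does not change its equation
    rw [← (hπQ x).tsum_eq]
    refine tsum_congr fun y => ?_
    by_cases hy : y ∈ truncSet w r
    · rw [Set.indicator_of_mem hy]
    · rw [Set.indicator_of_notMem hy, not_not.1 (mt (hx.2 y) hy), mul_zero, mul_zero]
  · calc ∑' x, w x * (truncSet w r).indicator π x
          = ∑' x, (truncSet w r).indicator (fun x => w x * π x) x := by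
          simp only [Set.indicator_apply, mul_ite, mul_zero]
      _ ≤ ∑' x, w x * π x := Summable.tsum_le_tsum
          (Set.indicator_le_self' fun x _ => mul_nonneg (hw x) (hπ0 x)) (hwπ.indicator _) hwπ
      _ ≤ c := hwπc

end Truncation

/-- `l̂^r` is `marginalBound sInf` and `û^r` is `marginalBound sSup`. -/
noncomputable def marginalBound (ext : Set ℝ → ℝ) (q : σ → σ → ℝ) (w : σ → ℝ) (c : ℝ)
    (A : ι → Set σ) (r : ℝ) : ι → ℝ :=
  {i | (A i ∩ truncSet w r).Nonempty}.indicator fun i =>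
    ext {t | ∃ ρ ∈ truncPolytope q w c r, t = ∑' x : A i, ρ x}

section MarginalBound

variable {q : σ → σ → ℝ} {w : σ → ℝ} {c r : ℝ} {A : ι → Set σ} {π ρ : σ → ℝ}

lemma marginalBound_of_nonempty (ext : Set ℝ → ℝ) {i : ι}
    (hi : (A i ∩ truncSet w r).Nonempty) :
    marginalBound ext q w c A r i = ext {t | ∃ ρ ∈ truncPolytope q w c r, t = ∑' x : A i, ρ x} :=
  Set.indicator_of_mem (s := {i | (A i ∩ truncSet w r).Nonempty}) hi _

lemma marginalBound_of_not_nonempty (ext : Set ℝ → ℝ) {i : ι}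
    (hi : ¬(A i ∩ truncSet w r).Nonempty) : marginalBound ext q w c A r i = 0 :=
  Set.indicator_of_notMem (s := {i | (A i ∩ truncSet w r).Nonempty}) hi _

lemma marginalBound_sInf_nonneg (i : ι) : 0 ≤ marginalBound sInf q w c A r i := by
  refine Set.indicator_nonneg (fun i _ => Real.sInf_nonneg ?_) i
  rintro _ ⟨ρ, hρ, rfl⟩
  exact tsum_nonneg fun x => hρ.1 x

lemma marginalBound_sInf_le (hρ : ρ ∈ truncPolytope q w c r) (i : ι) :
    marginalBound sInf q w c A r i ≤ ∑' x : A i, ρ x := by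
  by_cases hi : (A i ∩ truncSet w r).Nonempty
  · rw [marginalBound_of_nonempty _ hi]
    exact csInf_le ⟨0, fun _ ⟨ρ', hρ', ht⟩ => ht ▸ tsum_nonneg fun x => hρ'.1 x⟩ ⟨ρ, hρ, rfl⟩
  · rw [marginalBound_of_not_nonempty _ hi]
    exact tsum_nonneg fun x => hρ.1 x

lemma le_marginalBound_sSup (hS : (truncSet w r).Finite) (hρ : ρ ∈ truncPolytope q w c r)
    (i : ι) : ∑' x : A i, ρ x ≤ marginalBound sSup q w c A r i := by
  by_cases hi : (A i ∩ truncSet w r).Nonempty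
  · rw [marginalBound_of_nonempty _ hi]
    exact le_csSup
      ⟨1, fun _ ⟨ρ', hρ', ht⟩ => ht ▸ tsum_subtype_le_one_of_mem_truncPolytope hS hρ' _⟩
      ⟨ρ, hρ, rfl⟩
  · rw [marginalBound_of_not_nonempty _ hi,
      tsum_congr fun x : A i => hρ.2.1 x fun hx => hi ⟨x, x.2, hx⟩, tsum_zero]

lemma summable_marginalBound (hA : Pairwise (Disjoint on A)) (hS : (truncSet w r).Finite)
    (ext : Set ℝ → ℝ) : Summable (marginalBound ext q w c A r) :=
  summable_of_hasFiniteSupport <|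
    (finite_setOf_inter_nonempty hA hS).subset Set.support_indicator_subset

lemma hasSum_marginal (hA : Pairwise (Disjoint on A)) (hcov : ⋃ i, A i = Set.univ)
    (hπ : π ∈ statSet q w c) : HasSum (fun i => ∑' x : A i, π x) 1 :=
  hπ.2.1.tsum_eq ▸ hasSum_tsum_subtype_of_iUnion_eq_univ hA hcov hπ.2.1.summable

variable (hw : ∀ x, 0 ≤ w x) (hr : 0 < r) (hπ : π ∈ statSet q w c)
include hw hr hπ

lemma marginalBound_sInf_le_marginal (i : ι) :
    marginalBound sInf q w c A r i ≤ ∑' x : A i, π x :=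
  (marginalBound_sInf_le (indicator_mem_truncPolytope hw hr hπ) i).trans <|
    Summable.tsum_le_tsum (fun x => Set.indicator_le_self' (fun x _ => hπ.1 x) x)
      ((hπ.2.1.summable.indicator _).subtype _) (hπ.2.1.summable.subtype _)

lemma tvDist_marginalBound_sInf (hA : Pairwise (Disjoint on A)) (hcov : ⋃ i, A i = Set.univ)
    (hS : (truncSet w r).Finite) :
    tvDist (marginalBound sInf q w c A r) (fun i => ∑' x : A i, π x) =
      1 - ∑' i, marginalBound sInf q w c A r i := by
  have hπA := hasSum_marginal hA hcov hπ
  rw [tvDist_eq_tsum_sub_tsum_of_le (summable_marginalBound hA hS sInf) hπA.summable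
    (marginalBound_sInf_le_marginal hw hr hπ), hπA.tsum_eq]

lemma tvDist_marginalBound_sSup_le (hA : Pairwise (Disjoint on A))
    (hcov : ⋃ i, A i = Set.univ) (hS : (truncSet w r).Finite) :
    tvDist (marginalBound sSup q w c A r) (fun i => ∑' x : A i, π x) ≤
      max ((∑' i, marginalBound sSup q w c A r i) - 1 + ∑' x : ↥(truncSet w r)ᶜ, π x)
        (∑' x : ↥(truncSet w r)ᶜ, π x) := by
  have hπs := hπ.2.1.summable
  have hπA := hasSum_marginal hA hcov hπ
  have htail : HasSum (fun i => ∑' x : A i, (truncSet w r)ᶜ.indicator π x)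
      (∑' x : ↥(truncSet w r)ᶜ, π x) :=
    tsum_subtype _ π ▸ hasSum_tsum_subtype_of_iUnion_eq_univ hA hcov (hπs.indicator _)
  have hle := tvDist_le_of_sub_le (summable_marginalBound hA hS sSup) hπA.summable htail
    (fun i => tsum_nonneg fun x => Set.indicator_nonneg (fun x _ => hπ.1 x) x) fun i => by
      linarith [tsum_subtype_indicator_add_indicator_compl hπs (truncSet w r) (A i),
        le_marginalBound_sSup (A := A) hS (indicator_mem_truncPolytope hw hr hπ) i]
  rwa [hπA.tsum_eq] at hle

end MarginalBound

lemma sum_le_of_tendsto_of_tsum_le {α : Type*} {l : Filter α} [l.NeBot] {f : α → σ → ℝ}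
    {g : σ → ℝ} (hf0 : ∀ k x, 0 ≤ f k x) (hf : ∀ k, Summable (f k))
    (hlim : ∀ x, Tendsto (fun k => f k x) l (𝓝 (g x))) {b : ℝ} (hb : ∀ k, ∑' x, f k x ≤ b)
    (F : Finset σ) : ∑ x ∈ F, g x ≤ b :=
  le_of_tendsto' (tendsto_finsetSum F fun x _ => hlim x) fun k =>
    ((hf k).sum_le_tsum F fun x _ => hf0 k x).trans (hb k)

lemma abs_csSup_sub_le {V : Set ℝ} {a ε : ℝ} (hV : V.Nonempty) (h : ∀ t ∈ V, |t - a| ≤ ε) :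
    |sSup V - a| ≤ ε := by
  obtain ⟨t, ht⟩ := hV
  have hbdd : BddAbove V := ⟨a + ε, fun s hs => by linarith [(abs_le.1 (h s hs)).2]⟩
  refine abs_le.2 ⟨?_, ?_⟩
  · linarith [(abs_le.1 (h t ht)).1, le_csSup hbdd ht]
  · linarith [csSup_le ⟨t, ht⟩ fun s hs => show s ≤ a + ε by linarith [(abs_le.1 (h s hs)).2]]

lemma abs_csInf_sub_le {V : Set ℝ} {a ε : ℝ} (hV : V.Nonempty) (h : ∀ t ∈ V, |t - a| ≤ ε) :
    |sInf V - a| ≤ ε := by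
  obtain ⟨t, ht⟩ := hV
  have hbdd : BddBelow V := ⟨a - ε, fun s hs => by linarith [(abs_le.1 (h s hs)).1]⟩
  refine abs_le.2 ⟨?_, ?_⟩
  · linarith [le_csInf ⟨t, ht⟩ fun s hs => show a - ε ≤ s by linarith [(abs_le.1 (h s hs)).1]]
  · linarith [(abs_le.1 (h t ht)).2, csInf_le hbdd ht]

section Compactness

variable {q : σ → σ → ℝ} {w : σ → ℝ} {c : ℝ} {R : ℕ → ℝ} {ρ : ℕ → σ → ℝ} {ρL π : σ → ℝ}

lemma hasSum_stationary_of_tendsto (hq : ∀ x, {z | q z x ≠ 0}.Finite)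
    (hR : Tendsto R atTop atTop) (hρ : ∀ k, ρ k ∈ truncPolytope q w c (R k))
    (hlim : ∀ x, Tendsto (fun k => ρ k x) atTop (𝓝 (ρL x))) (x : σ) :
    HasSum (fun y => ρL y * q y x) 0 := by
  set F := (hq x).toFinset
  have hout : ∀ f : σ → ℝ, ∀ y ∉ F, f y * q y x = 0 := fun f y hy => by
    rw [show q y x = 0 by simpa [F] using hy, mul_zero]
  have hx : ∀ᶠ k in atTop, x ∈ eqStates q w (R k) := by
    filter_upwards [hR.eventually_gt_atTop (w x),
      (hq x).eventually_all.2 fun z _ => hR.eventually_gt_atTop (w z)] with k hxk hzk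
    exact ⟨hxk, hzk⟩
  have hzero : ∀ᶠ k in atTop, ∑ y ∈ F, ρ k y * q y x = 0 := hx.mono fun k hk => by
    have hk' := (hρ k).2.2.1 x hk
    rwa [tsum_eq_sum (hout (ρ k))] at hk'
  have hsum : ∑ y ∈ F, ρL y * q y x = 0 :=
    tendsto_nhds_unique (tendsto_finsetSum F fun y _ => (hlim y).mul_const _)
      (tendsto_const_nhds.congr' (hzero.mono fun k hk => hk.symm))
  simpa only [hsum] using hasSum_sum_of_ne_finset_zero (hout ρL)

lemma hasSum_one_of_tendsto (hw : ∀ x, 0 ≤ w x) (hS : ∀ r, (truncSet w r).Finite)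
    (hR : Tendsto R atTop atTop) (hρ : ∀ k, ρ k ∈ truncPolytope q w c (R k))
    (hlim : ∀ x, Tendsto (fun k => ρ k x) atTop (𝓝 (ρL x))) : HasSum ρL 1 := by
  have hnonneg : ∀ x, 0 ≤ ρL x := fun x => ge_of_tendsto' (hlim x) fun k => (hρ k).1 x
  have hle : ∀ F : Finset σ, ∑ x ∈ F, ρL x ≤ 1 :=
    sum_le_of_tendsto_of_tsum_le (fun k => (hρ k).1)
      (fun k => summable_of_mem_truncPolytope (hS _) (hρ k)) hlim fun k => (hρ k).2.2.2.2.1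
  have hsum : Summable ρL := summable_of_sum_le hnonneg hle
  -- no mass escapes: `ρ k` carries at least `1 - c / R k - c / m` on the finite set `S_m`
  have hge : ∀ m : ℕ, 0 < m → 1 - c / m ≤ ∑' x, ρL x := fun m hm => by
    have hm' : (0 : ℝ) < m := Nat.cast_pos.2 hm
    have hlow : Tendsto (fun k => 1 - c / R k - c / m) atTop (𝓝 (1 - c / m)) := by
      simpa using (tendsto_const_nhds.sub (tendsto_const_nhds.div_atTop hR)).sub_const (c / m)
    calc 1 - c / m ≤ ∑ x ∈ (hS m).toFinset, ρL x :=
          le_of_tendsto_of_tendsto' hlow (tendsto_finsetSum _ fun x _ => hlim x) fun k =>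
            (hS m).tsum_subtype_eq_sum (ρ k) ▸
              one_sub_le_tsum_truncSet_of_mem_truncPolytope hw (hS _) hm' (hρ k)
      _ ≤ ∑' x, ρL x := hsum.sum_le_tsum _ fun x _ => hnonneg x
  refine hsum.hasSum_iff.2 (le_antisymm (hsum.tsum_le_of_sum_le hle) ?_)
  refine le_of_tendsto ?_ ((eventually_gt_atTop 0).mono hge)
  simpa using tendsto_const_nhds.sub (tendsto_const_div_atTop_nhds_zero_nat c)

lemma mem_statSet_of_tendsto (hq : ∀ x, {z | q z x ≠ 0}.Finite) (hw : ∀ x, 0 ≤ w x)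
    (hS : ∀ r, (truncSet w r).Finite) (hR : Tendsto R atTop atTop)
    (hρ : ∀ k, ρ k ∈ truncPolytope q w c (R k))
    (hlim : ∀ x, Tendsto (fun k => ρ k x) atTop (𝓝 (ρL x))) : ρL ∈ statSet q w c := by
  have hnonneg : ∀ x, 0 ≤ ρL x := fun x => ge_of_tendsto' (hlim x) fun k => (hρ k).1 x
  have hle : ∀ F : Finset σ, ∑ x ∈ F, w x * ρL x ≤ c :=
    sum_le_of_tendsto_of_tsum_le (fun k x => mul_nonneg (hw x) ((hρ k).1 x))
      (fun k => summable_mul_of_mem_truncPolytope (hS _) (hρ k) w)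
      (fun x => (hlim x).const_mul (w x)) fun k => (hρ k).2.2.2.2.2
  have hsum := summable_of_sum_le (fun x => mul_nonneg (hw x) (hnonneg x)) hle
  exact ⟨hnonneg, hasSum_one_of_tendsto hw hS hR hρ hlim,
    hasSum_stationary_of_tendsto hq hR hρ hlim, hsum, hsum.tsum_le_of_sum_le hle⟩

variable [Countable σ]

lemma eventually_sum_abs_sub_le (hq : ∀ x, {z | q z x ≠ 0}.Finite) (hw : ∀ x, 0 ≤ w x)
    (hS : ∀ r, (truncSet w r).Finite) (hstat : statSet q w c = {π}) (F : Finset σ) {ε : ℝ}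
    (hε : 0 < ε) :
    ∀ᶠ r : ℕ in atTop, ∀ ρ ∈ truncPolytope q w c r, ∑ x ∈ F, |ρ x - π x| ≤ ε := by
  by_contra h
  obtain ⟨φ, hφ, hbad⟩ := extraction_of_frequently_atTop (not_eventually.1 h)
  simp only [not_forall, not_le, exists_prop] at hbad
  choose ρ hρ hfar using hbad
  have hcube : ∀ k, ρ k ∈ Set.univ.pi fun _ => Set.Icc (0 : ℝ) 1 := fun k =>
    Set.mem_univ_pi.2 fun x => ⟨(hρ k).1 x, le_one_of_mem_truncPolytope (hS _) (hρ k) x⟩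
  obtain ⟨ρL, -, ψ, hψ, hlim⟩ := (isCompact_univ_pi fun _ => isCompact_Icc).tendsto_subseq hcube
  have hpt := tendsto_pi_nhds.1 hlim
  have hρL : ρL = π := by
    rw [← Set.mem_singleton_iff, ← hstat]
    exact mem_statSet_of_tendsto hq hw hS
      (tendsto_natCast_atTop_atTop.comp (hφ.comp hψ).tendsto_atTop) (fun k => hρ (ψ k)) hpt
  have hsmall : Tendsto (fun k => ∑ x ∈ F, |ρ (ψ k) x - π x|) atTop (𝓝 0) := by
    simpa [hρL] using tendsto_finsetSum F fun x _ => ((hpt x).sub_const (π x)).abs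
  obtain ⟨k, hk⟩ := (hsmall.eventually (gt_mem_nhds hε)).exists
  exact (hfar (ψ k)).not_gt hk

lemma eventually_tsum_abs_sub_le (hq : ∀ x, {z | q z x ≠ 0}.Finite) (hw : ∀ x, 0 ≤ w x)
    (hS : ∀ r, (truncSet w r).Finite) (hstat : statSet q w c = {π}) {ε : ℝ} (hε : 0 < ε) :
    ∀ᶠ r : ℕ in atTop, ∀ ρ ∈ truncPolytope q w c r, ∑' x, |ρ x - π x| ≤ ε := by
  have hπ : π ∈ statSet q w c := hstat ▸ rfl
  have hπs := hπ.2.1.summable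
  obtain ⟨m, hm, hcm⟩ := ((eventually_gt_atTop 0).and
    ((tendsto_const_div_atTop_nhds_zero_nat c).eventually
      (gt_mem_nhds (by positivity : 0 < ε / 4)))).exists
  have hm' : (0 : ℝ) < m := Nat.cast_pos.2 hm
  filter_upwards [eventually_sum_abs_sub_le hq hw hS hstat (hS m).toFinset (half_pos hε)]
    with r hr ρ hρ
  have hρs := summable_of_mem_truncPolytope (hS r) hρ
  have hd := (hρs.sub hπs).abs
  -- on the finite set `S_m` use uniform convergence, off it tightness of both measures
  have htail : ∑' x : ↥(truncSet w m)ᶜ, |ρ x - π x| ≤ c / m + c / m :=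
    calc ∑' x : ↥(truncSet w m)ᶜ, |ρ x - π x| ≤ ∑' x : ↥(truncSet w m)ᶜ, (ρ x + π x) :=
          Summable.tsum_le_tsum (fun x => (abs_sub _ _).trans_eq (by
            rw [abs_of_nonneg (hρ.1 x), abs_of_nonneg (hπ.1 x)])) (hd.subtype _)
            ((hρs.add hπs).subtype _)
      _ = ∑' x : ↥(truncSet w m)ᶜ, ρ x + ∑' x : ↥(truncSet w m)ᶜ, π x :=
          Summable.tsum_add (hρs.subtype _) (hπs.subtype _)
      _ ≤ c / m + c / m := add_le_add
          (tsum_compl_truncSet_le_of_mem_truncPolytope hw (hS r) hm' hρ)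
          (tsum_compl_truncSet_le_of_mem_statSet hw hm' hπ)
  rw [← Summable.tsum_add_tsum_compl (s := truncSet w m) (hd.subtype _) (hd.subtype _),
    (hS m).tsum_subtype_eq_sum fun x => |ρ x - π x|]
  linarith [hr ρ hρ]

end Compactness

section Convergence

variable [Countable σ] {q : σ → σ → ℝ} {w : σ → ℝ} {c : ℝ} {π : σ → ℝ}
  (hq : ∀ x, {z | q z x ≠ 0}.Finite) (hw : ∀ x, 0 ≤ w x) (hS : ∀ r, (truncSet w r).Finite)
  (hstat : statSet q w c = {π})
include hq hw hS hstat

lemma tendsto_marginalBound {ext : Set ℝ → ℝ}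
    (hext : ∀ (V : Set ℝ) (a ε : ℝ), V.Nonempty → (∀ t ∈ V, |t - a| ≤ ε) → |ext V - a| ≤ ε)
    (A : ι → Set σ) (i : ι) :
    Tendsto (fun r : ℕ => marginalBound ext q w c A r i) atTop (𝓝 (∑' x : A i, π x)) := by
  have hπ : π ∈ statSet q w c := hstat ▸ rfl
  refine Metric.tendsto_nhds.2 fun ε hε => ?_
  filter_upwards [eventually_tsum_abs_sub_le hq hw hS hstat (half_pos hε),
    (tendsto_const_div_atTop_nhds_zero_nat c).eventually (gt_mem_nhds hε),
    eventually_gt_atTop 0] with r hL1 hcr hr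
  have hr' : (0 : ℝ) < r := Nat.cast_pos.2 hr
  rw [Real.dist_eq]
  by_cases hi : (A i ∩ truncSet w r).Nonempty
  · rw [marginalBound_of_nonempty _ hi]
    refine (hext _ _ _ ?_ ?_).trans_lt (half_lt_self hε)
    · exact ⟨_, _, indicator_mem_truncPolytope hw hr' hπ, rfl⟩
    rintro t ⟨ρ, hρ, rfl⟩
    exact (abs_tsum_subtype_sub_le (summable_of_mem_truncPolytope (hS r) hρ)
      hπ.2.1.summable (A i)).trans (hL1 ρ hρ)
  · -- `A i` misses `S_r`, so its `π`-mass is part of the tail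
    rw [marginalBound_of_not_nonempty _ hi, zero_sub, abs_neg,
      abs_of_nonneg (tsum_nonneg fun x : A i => hπ.1 x)]
    calc ∑' x : A i, π x ≤ ∑' x : ↥(truncSet w r)ᶜ, π x :=
          tsum_subtype_le_tsum_subtype hπ.1 hπ.2.1.summable fun x hx hxS => hi ⟨x, hx, hxS⟩
      _ ≤ c / r := tsum_compl_truncSet_le_of_mem_statSet hw hr' hπ
      _ < ε := hcr

lemma tendsto_tvDist_marginalBound_sInf {A : ι → Set σ} (hA : Pairwise (Disjoint on A))
    (hcov : ⋃ i, A i = Set.univ) :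
    Tendsto (fun r : ℕ => tvDist (marginalBound sInf q w c A r) fun i => ∑' x : A i, π x)
      atTop (𝓝 0) := by
  have hπ : π ∈ statSet q w c := hstat ▸ rfl
  have hπA := hasSum_marginal hA hcov hπ
  have hmass : Tendsto (fun r : ℕ => ∑' i, marginalBound sInf q w c A r i) atTop (𝓝 1) :=
    hπA.tsum_eq ▸ tendsto_tsum_of_dominated_convergence hπA.summable
      (tendsto_marginalBound hq hw hS hstat (fun _ _ _ => abs_csInf_sub_le) A)
      ((eventually_gt_atTop 0).mono fun r hr i => by
        rw [Real.norm_of_nonneg (marginalBound_sInf_nonneg i)]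
        exact marginalBound_sInf_le_marginal hw (Nat.cast_pos.2 hr) hπ i)
  refine (by simpa using (tendsto_const_nhds (x := (1 : ℝ))).sub hmass :
    Tendsto (fun r : ℕ => 1 - ∑' i, marginalBound sInf q w c A r i) atTop (𝓝 0)).congr' ?_
  filter_upwards [eventually_gt_atTop 0] with r hr
  exact (tvDist_marginalBound_sInf hw (Nat.cast_pos.2 hr) hπ hA hcov (hS r)).symm

end Convergence

end MarginalDistributionBounds

theorem marginal_distribution_bounds_general
    {σ : Type*} [Countable σ] {ι : Type*} (q : σ → σ → ℝ)
    (hq_fin : ∀ x : σ, {z : σ | q z x ≠ 0}.Finite)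
    (w : σ → ℝ) (hw_nonneg : ∀ x, 0 ≤ w x)
    (hw_norm : ∀ r : ℝ, (truncSet w r).Finite)
    (c : ℝ)
    (A : ι → Set σ) (hA_disj : ∀ i j, i ≠ j → Disjoint (A i) (A j))
    (hA_cover : (⋃ i, A i) = Set.univ)
    (lhat uhat : ℕ → ι → ℝ)
    (hlhat : ∀ r : ℕ, lhat r =
      ({i : ι | (A i ∩ truncSet w (r : ℝ)).Nonempty}).indicator fun i =>
        sInf {t : ℝ | ∃ ρ ∈ truncPolytope q w c (r : ℝ), t = ∑' x : A i, ρ x})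
    (huhat : ∀ r : ℕ, uhat r =
      ({i : ι | (A i ∩ truncSet w (r : ℝ)).Nonempty}).indicator fun i =>
        sSup {t : ℝ | ∃ ρ ∈ truncPolytope q w c (r : ℝ), t = ∑' x : A i, ρ x}) :
    (∀ π ∈ statSet q w c, ∀ r : ℕ, 1 ≤ r →
      (∀ i : ι, lhat r i ≤ ∑' x : A i, π x) ∧
      tvDist (lhat r) (fun i => ∑' x : A i, π x) = 1 - ∑' i, lhat r i ∧
      tvDist (uhat r) (fun i => ∑' x : A i, π x) ≤
        max ((∑' i, uhat r i) - 1 + ∑' x : ↥(truncSet w (r : ℝ))ᶜ, π x)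
          (∑' x : ↥(truncSet w (r : ℝ))ᶜ, π x) ∧
      max ((∑' i, uhat r i) - 1 + ∑' x : ↥(truncSet w (r : ℝ))ᶜ, π x)
          (∑' x : ↥(truncSet w (r : ℝ))ᶜ, π x) ≤
        max ((∑' i, uhat r i) - 1 + c / r) (c / r)) ∧
    (∀ π : σ → ℝ, statSet q w c = {π} →
      (∀ i : ι, Tendsto (fun r : ℕ => uhat r i) atTop (nhds (∑' x : A i, π x))) ∧
      Tendsto (fun r : ℕ => tvDist (lhat r) (fun i => ∑' x : A i, π x)) atTop
        (nhds 0)) := by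
  obtain rfl : lhat = fun r : ℕ => marginalBound sInf q w c A r := funext hlhat
  obtain rfl : uhat = fun r : ℕ => marginalBound sSup q w c A r := funext huhat
  refine ⟨fun π hπ r hr => ?_, fun π hstat => ?_⟩
  · have hr' : (0 : ℝ) < r := by exact_mod_cast hr
    have htail := tsum_compl_truncSet_le_of_mem_statSet hw_nonneg hr' hπ
    exact ⟨marginalBound_sInf_le_marginal hw_nonneg hr' hπ,
      tvDist_marginalBound_sInf hw_nonneg hr' hπ hA_disj hA_cover (hw_norm r),
      tvDist_marginalBound_sSup_le hw_nonneg hr' hπ hA_disj hA_cover (hw_norm r),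
      max_le_max (by linarith) htail⟩
  · exact ⟨tendsto_marginalBound hq_fin hw_nonneg hw_norm hstat
      (fun _ _ _ => abs_csSup_sub_le) A,
      tendsto_tvDist_marginalBound_sInf hq_fin hw_nonneg hw_norm hstat hA_disj hA_cover⟩

/-- **Statement 14** (corollary on marginal distribution bounds).
For a partition `{A_i}_{i ∈ I}` of `S` into pairwise disjoint sets, with marginal
`π̂(i) = π(A_i)`, `I_r = {i : A_i ∩ S_r ≠ ∅}`, and
`l̂^r(i) = inf {π^r(A_i) : π^r ∈ P^r_{w,c}}`,
`û^r(i) = sup {π^r(A_i) : π^r ∈ P^r_{w,c}}` on `I_r` (and `0` outside):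
(i) for any `π ∈ P_{w,c}` and `r ≥ 1`, `l̂^r ≤ π̂` on `I`,
    `‖l̂^r - π̂‖ = 1 - ∑_{i ∈ I_r} l̂^r(i)` and
    `‖û^r - π̂‖ ≤ max (∑_{i ∈ I_r} û^r(i) - 1 + m_r) m_r ≤
     max (∑_{i ∈ I_r} û^r(i) - 1 + c/r) (c/r)`;
(ii) if `P_{w,c} = {π}` is a singleton, `û^r → π̂` pointwise and `l̂^r → π̂` in total
     variation. -/
theorem marginal_distribution_bounds
    {σ : Type*} [Countable σ] {ι : Type*} [Countable ι] (q : σ → σ → ℝ)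
    (hq_offdiag : ∀ x y : σ, x ≠ y → 0 ≤ q x y)
    (hq_row : ∀ x : σ, HasSum (fun y => if y = x then 0 else q x y) (-(q x x)))
    (hq_fin : ∀ x : σ, {z : σ | q z x ≠ 0}.Finite)
    (w : σ → ℝ) (hw_nonneg : ∀ x, 0 ≤ w x)
    (hw_norm : ∀ r : ℝ, (truncSet w r).Finite)
    (c : ℝ) (hP : (statSet q w c).Nonempty)
    (A : ι → Set σ) (hA_disj : ∀ i j, i ≠ j → Disjoint (A i) (A j))
    (hA_cover : (⋃ i, A i) = Set.univ)
    (lhat uhat : ℕ → ι → ℝ)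
    (hlhat : ∀ r : ℕ, lhat r =
      ({i : ι | (A i ∩ truncSet w (r : ℝ)).Nonempty}).indicator fun i =>
        sInf {t : ℝ | ∃ ρ ∈ truncPolytope q w c (r : ℝ), t = ∑' x : A i, ρ x})
    (huhat : ∀ r : ℕ, uhat r =
      ({i : ι | (A i ∩ truncSet w (r : ℝ)).Nonempty}).indicator fun i =>
        sSup {t : ℝ | ∃ ρ ∈ truncPolytope q w c (r : ℝ), t = ∑' x : A i, ρ x}) :
    (∀ π ∈ statSet q w c, ∀ r : ℕ, 1 ≤ r →
      (∀ i : ι, lhat r i ≤ ∑' x : A i, π x) ∧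
      tvDist (lhat r) (fun i => ∑' x : A i, π x) = 1 - ∑' i, lhat r i ∧
      tvDist (uhat r) (fun i => ∑' x : A i, π x) ≤
        max ((∑' i, uhat r i) - 1 + ∑' x : ↥(truncSet w (r : ℝ))ᶜ, π x)
          (∑' x : ↥(truncSet w (r : ℝ))ᶜ, π x) ∧
      max ((∑' i, uhat r i) - 1 + ∑' x : ↥(truncSet w (r : ℝ))ᶜ, π x)
          (∑' x : ↥(truncSet w (r : ℝ))ᶜ, π x) ≤
        max ((∑' i, uhat r i) - 1 + c / r) (c / r)) ∧
    (∀ π : σ → ℝ, statSet q w c = {π} →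
      (∀ i : ι, Tendsto (fun r : ℕ => uhat r i) atTop (nhds (∑' x : A i, π x))) ∧
      Tendsto (fun r : ℕ => tvDist (lhat r) (fun i => ∑' x : A i, π x)) atTop
        (nhds 0)) :=
  marginal_distribution_bounds_general q hq_fin w hw_nonneg hw_norm c A hA_disj hA_cover lhat uhat
    hlhat huhat
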